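/- arXiv:1502.06026 — 6 statements merged into one kernel-verified Lean document; each statement's English description precedes it below -/
import Mathlib

section
/- Let r > 1 and set r' := r/(r-1), and let d ≥ 1. For every (m,w) ∈ ℝ × ℝ^d one has sup{ a·m + b·w : (a,b) ∈ ℝ × ℝ^d, a + (1/r')|b|^{r'} ≤ 0 } = ℓ_r(m,w) as extended reals; explicitly the supremum equals (1/r)|w|^r / m^{r-1} if m > 0, equals 0 if m = 0 and w = 0, and equals +∞ if m < 0 or (m = 0 and w ≠ 0). -/
open MeasureTheory
open scoped RealInnerProductSpace Classical

/-! For `m > 0` this is the Fenchel–Young inequality for `|·|^r / r`, rescaled by `m`: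
`a m + ⟪b, w⟫ ≤ -m |b|^{r'}/r' + |b| |w| ≤ |w|^r / (r m^{r-1})` on the constraint set,
with equality at `|b| = (|w|/m)^{r-1}`, `b` parallel to `w`, and `a = -|b|^{r'}/r'`.
For `m < 0` the points `(-t, 0)`, and for `m = 0`, `w ≠ 0` the points
`(-|tw|^{r'}/r', tw)`, make the pairing unbounded. -/

/-- The function `ℓ_r : ℝ × ℝ^d → ℝ ∪ {+∞}`:
`ℓ_r(a,b) = (1/r)|b|^r / a^(r-1)` if `a > 0`, `0` if `(a,b) = (0,0)`, `+∞` otherwise. -/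
noncomputable def ell (r : ℝ) (d : ℕ) (a : ℝ) (b : EuclideanSpace ℝ (Fin d)) : EReal :=
  if 0 < a then (((1 / r) * ‖b‖ ^ r / a ^ (r - 1) : ℝ) : EReal)
  else if a = 0 ∧ b = 0 then 0
  else ⊤

section Young

variable {r q m s t : ℝ}

theorem young_inequality_weighted (hpq : r.HolderConjugate q) (hm : 0 < m) (hs : 0 ≤ s)
    (ht : 0 ≤ t) : s * t ≤ 1 / q * s ^ q * m + 1 / r * t ^ r / m ^ (r - 1) := by
  set c := m ^ q⁻¹
  have hc : 0 < c := Real.rpow_pos_of_pos hm _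
  have hcq : c ^ q = m := by
    rw [← Real.rpow_mul hm.le, inv_mul_cancel₀ hpq.symm.ne_zero, Real.rpow_one]
  have hcr : c ^ r = m ^ (r - 1) := by
    rw [← Real.rpow_mul hm.le, inv_mul_eq_div, hpq.div_conj_eq_sub_one]
  have key := Real.young_inequality_of_nonneg (div_nonneg ht hc.le) (mul_nonneg hs hc.le) hpq
  rw [Real.div_rpow ht hc.le, Real.mul_rpow hs hc.le, hcq, hcr] at key
  calc s * t = t / c * (s * c) := by field_simp
    _ ≤ _ := key
    _ = _ := by ring

theorem young_inequality_weighted_eq (hpq : r.HolderConjugate q) (hm : 0 < m) (ht : 0 ≤ t) :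
    (t / m) ^ (r - 1) * t =
      1 / q * ((t / m) ^ (r - 1)) ^ q * m + 1 / r * t ^ r / m ^ (r - 1) := by
  have hst : (t / m) ^ (r - 1) * t = t ^ r / m ^ (r - 1) := by
    rw [Real.div_rpow ht hm.le, div_mul_eq_mul_div, ← Real.rpow_add_one' ht (by simp [hpq.ne_zero]),
      sub_add_cancel]
  have hsq : ((t / m) ^ (r - 1)) ^ q * m = t ^ r / m ^ (r - 1) := by
    rw [← Real.rpow_mul (div_nonneg ht hm.le), hpq.sub_one_mul_conj, Real.div_rpow ht hm.le,
      ← sub_add_cancel r 1, Real.rpow_add_one hm.ne', add_sub_cancel_right]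
    field_simp
  rw [hst, mul_assoc, hsq]
  linear_combination (-(t ^ r / m ^ (r - 1))) * hpq.inv_add_inv_eq_one

end Young

theorem EReal.sSup_image_coe_eq_top {α : Type*} {f : α → ℝ} {K : Set α}
    (h : ∀ x : ℝ, ∃ p ∈ K, x < f p) : sSup ((fun p => (f p : EReal)) '' K) = ⊤ := by
  refine sSup_eq_top.2 fun y hy => ?_
  induction y using EReal.rec with
  | bot =>
    obtain ⟨p, hp, -⟩ := h 0
    exact ⟨_, Set.mem_image_of_mem _ hp, EReal.bot_lt_coe _⟩
  | coe x =>
    obtain ⟨p, hp, hxp⟩ := h x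
    exact ⟨_, Set.mem_image_of_mem _ hp, EReal.coe_lt_coe_iff.2 hxp⟩
  | top => exact absurd hy (lt_irrefl _)

section ConstraintSet

variable {E : Type*} [NormedAddCommGroup E] {r q m : ℝ}

variable (E) in
def constraintSet (q : ℝ) : Set (ℝ × E) := {p | p.1 + 1 / q * ‖p.2‖ ^ q ≤ 0}

theorem mem_constraintSet_zero_right (hq : q ≠ 0) {a : ℝ} (ha : a ≤ 0) :
    (a, (0 : E)) ∈ constraintSet E q := by
  simpa [constraintSet, Real.zero_rpow hq] using ha

theorem mem_constraintSet_boundary (q : ℝ) (b : E) :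
    (-(1 / q * ‖b‖ ^ q), b) ∈ constraintSet E q := by
  simp [constraintSet]

variable [InnerProductSpace ℝ E] {w : E}

theorem exists_mem_constraintSet_lt_of_neg (hq : q ≠ 0) (hm : m < 0) (x : ℝ) :
    ∃ p ∈ constraintSet E q, x < p.1 * m + ⟪p.2, w⟫ := by
  set t := (|x| + 1) / -m
  have ht : 0 ≤ t := div_nonneg (by positivity) (by linarith)
  refine ⟨(-t, 0), mem_constraintSet_zero_right hq (neg_nonpos.2 ht), ?_⟩
  have : -t * m = |x| + 1 := by
    simp only [t]
    field_simp [hm.ne]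
  simp only [inner_zero_left, add_zero, this]
  linarith [le_abs_self x]

theorem exists_mem_constraintSet_lt_of_ne_zero (hw : w ≠ 0) (x : ℝ) :
    ∃ p ∈ constraintSet E q, x < p.1 * 0 + ⟪p.2, w⟫ := by
  set t := (|x| + 1) / ‖w‖ ^ 2
  refine ⟨_, mem_constraintSet_boundary q (t • w), ?_⟩
  have : ⟪t • w, w⟫ = |x| + 1 := by
    rw [real_inner_smul_left, real_inner_self_eq_norm_sq]
    simp only [t]
    field_simp [norm_ne_zero_iff.2 hw]
  simp only [mul_zero, zero_add, this]
  linarith [le_abs_self x]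

theorem pairing_le_of_mem_constraintSet (hpq : r.HolderConjugate q) (hm : 0 < m) {p : ℝ × E}
    (hp : p ∈ constraintSet E q) : p.1 * m + ⟪p.2, w⟫ ≤ 1 / r * ‖w‖ ^ r / m ^ (r - 1) := by
  have hyoung := young_inequality_weighted hpq hm (norm_nonneg p.2) (norm_nonneg w)
  have hp' : p.1 ≤ -(1 / q * ‖p.2‖ ^ q) := by
    simp only [constraintSet, Set.mem_ofPred_eq] at hp
    linarith
  have ha := mul_le_mul_of_nonneg_right hp' hm.le
  linarith [real_inner_le_norm p.2 w]

theorem exists_mem_constraintSet_pairing_eq (hpq : r.HolderConjugate q) (hm : 0 < m) (w : E) :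
    ∃ p ∈ constraintSet E q, p.1 * m + ⟪p.2, w⟫ = 1 / r * ‖w‖ ^ r / m ^ (r - 1) := by
  rcases eq_or_ne w 0 with rfl | hw
  · refine ⟨(0, 0), mem_constraintSet_zero_right hpq.symm.ne_zero le_rfl, ?_⟩
    simp [Real.zero_rpow hpq.ne_zero]
  set s := (‖w‖ / m) ^ (r - 1)
  have hw' : ‖w‖ ≠ 0 := norm_ne_zero_iff.2 hw
  have hs : 0 ≤ s := by positivity
  refine ⟨_, mem_constraintSet_boundary q ((s / ‖w‖) • w), ?_⟩
  have hnorm : ‖(s / ‖w‖) • w‖ = s := by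
    rw [norm_smul, Real.norm_eq_abs, abs_of_nonneg (by positivity), div_mul_cancel₀ _ hw']
  have hinner : ⟪(s / ‖w‖) • w, w⟫ = s * ‖w‖ := by
    rw [real_inner_smul_left, real_inner_self_eq_norm_sq]
    field_simp
  rw [hnorm, hinner, young_inequality_weighted_eq hpq hm (norm_nonneg w)]
  ring

theorem isGreatest_pairing_constraintSet (hpq : r.HolderConjugate q) (hm : 0 < m) (w : E) :
    IsGreatest ((fun p : ℝ × E => ((p.1 * m + ⟪p.2, w⟫ : ℝ) : EReal)) '' constraintSet E q)
      ((1 / r * ‖w‖ ^ r / m ^ (r - 1) : ℝ) : EReal) := by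
  obtain ⟨p, hp, hpeq⟩ := exists_mem_constraintSet_pairing_eq hpq hm w
  refine ⟨⟨p, hp, congrArg _ hpeq⟩, ?_⟩
  rintro _ ⟨p', hp', rfl⟩
  exact EReal.coe_le_coe_iff.2 (pairing_le_of_mem_constraintSet hpq hm hp')

end ConstraintSet

theorem stmt_0_general (r : ℝ) (hr : 1 < r) (d : ℕ)
    (m : ℝ) (w : EuclideanSpace ℝ (Fin d)) :
    sSup ((fun p : ℝ × EuclideanSpace ℝ (Fin d) =>
        ((p.1 * m + ⟪p.2, w⟫ : ℝ) : EReal)) ''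
      {p : ℝ × EuclideanSpace ℝ (Fin d) |
        p.1 + (1 / (r / (r - 1))) * ‖p.2‖ ^ (r / (r - 1)) ≤ 0}) = ell r d m w := by
  have hpq : r.HolderConjugate (r / (r - 1)) := .conjExponent hr
  change sSup (_ '' constraintSet _ _) = _
  rcases lt_trichotomy m 0 with hm | rfl | hm
  · rw [ell, if_neg hm.not_gt, if_neg fun h => hm.ne h.1]
    exact EReal.sSup_image_coe_eq_top (exists_mem_constraintSet_lt_of_neg hpq.symm.ne_zero hm)
  · rcases eq_or_ne w 0 with rfl | hw
    · rw [ell, if_neg (lt_irrefl 0), if_pos ⟨rfl, rfl⟩]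
      refine IsGreatest.csSup_eq
        ⟨⟨(0, 0), mem_constraintSet_zero_right hpq.symm.ne_zero le_rfl, by simp⟩, ?_⟩
      rintro _ ⟨p, -, rfl⟩
      simp
    · rw [ell, if_neg (lt_irrefl 0), if_neg fun h => hw h.2]
      exact EReal.sSup_image_coe_eq_top (exists_mem_constraintSet_lt_of_ne_zero hw)
  · rw [ell, if_pos hm]
    exact (isGreatest_pairing_constraintSet hpq hm w).csSup_eq

/-- For `r > 1`, `r' := r/(r-1)` and `d ≥ 1`, for every `(m,w) ∈ ℝ × ℝ^d` one has
`sup{ a·m + b·w : a + (1/r')|b|^{r'} ≤ 0 } = ℓ_r(m,w)` as extended reals. -/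
theorem stmt_0 (r : ℝ) (hr : 1 < r) (d : ℕ) (hd : 1 ≤ d)
    (m : ℝ) (w : EuclideanSpace ℝ (Fin d)) :
    sSup ((fun p : ℝ × EuclideanSpace ℝ (Fin d) =>
        ((p.1 * m + ⟪p.2, w⟫ : ℝ) : EReal)) ''
      {p : ℝ × EuclideanSpace ℝ (Fin d) |
        p.1 + (1 / (r / (r - 1))) * ‖p.2‖ ^ (r / (r - 1)) ≤ 0}) = ell r d m w :=
  stmt_0_general r hr d m w
end

section
/- Let r > 1, r' := r/(r-1), and let Ω ⊂ ℝ^d be a measurable set of finite Lebesgue measure. Let m : Ω → ℝ be measurable with m ≥ 0 a.e. and w : Ω → ℝ^d measurable. For k ∈ ℕ set A_{r',k} := { (a,b) ∈ ℝ × ℝ^d : a + (1/r')|b|^{r'} ≤ 0, a ≥ -k, max_{1≤i≤d}|b_i| ≤ k }. Then the extended-real integrals ∫_Ω sup_{(a,b)∈A_{r',k}} ( a·m(x) + b·w(x) ) dx form a nondecreasing sequence in k whose limit is ∫_Ω ℓ_r(m(x),w(x)) dx. -/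
/-! For `a ≥ 0`, `ℓ_r(a, b)` is the supremum of `α a + ⟪β, b⟫` over the untruncated set
`A_{r'} = {(α, β) : α + |β|^{r'}/r' ≤ 0}`. For `a > 0` Young's inequality bounds the pairing by
`ℓ_r(a, b)`, with equality at `β = (|b|/a)^{r-1} b/|b|`, `α = -|β|^{r'}/r'`; for `a = 0 ≠ b` the
pairing is unbounded along the ray through `b`. Since the sets `A_{r',k}` increase to `A_{r'}`,
the truncated suprema increase pointwise to `ℓ_r(m, w)` wherever `m ≥ 0`, and monotone
convergence passes this to the integrals. The truncated suprema are measurable because, by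
continuity, the supremum may be taken over a countable dense subset of `A_{r',k}`. -/

open MeasureTheory Filter
open scoped RealInnerProductSpace Classical ENNReal Topology

/-- The function `ℓ_r`, with values in `[0,∞]`. -/
noncomputable def ellENN (r : ℝ) (d : ℕ) (a : ℝ) (b : EuclideanSpace ℝ (Fin d)) : ℝ≥0∞ :=
  if 0 < a then ENNReal.ofReal ((1 / r) * ‖b‖ ^ r / a ^ (r - 1))
  else if a = 0 ∧ b = 0 then 0
  else ⊤

open Set

theorem Real.sSup_eq_of_subset_of_subset_closure {s t : Set ℝ} (hst : s ⊆ t)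
    (hts : t ⊆ closure s) : sSup t = sSup s := by
  rcases s.eq_empty_or_nonempty with rfl | hs
  · rw [closure_empty, subset_empty_iff] at hts
    rw [hts]
  by_cases hb : BddAbove s
  · exact ((isLUB_iff_of_subset_of_subset_closure hst hts).1 (isLUB_csSup hs hb)).csSup_eq
      (hs.mono hst)
  · rw [Real.sSup_of_not_bddAbove hb, Real.sSup_of_not_bddAbove fun ht => hb (ht.mono hst)]

theorem measurable_sSup_image {α X : Type*} [MeasurableSpace α] [TopologicalSpace X]
    [TopologicalSpace.PseudoMetrizableSpace X] [TopologicalSpace.SeparableSpace X]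
    {f : α → X → ℝ} (hmeas : ∀ p, Measurable (f · p)) (hcont : ∀ x, Continuous (f x))
    (S : Set X) : Measurable fun x => sSup (f x '' S) := by
  obtain ⟨T, hTS, hT, hST⟩ :=
    (TopologicalSpace.IsSeparable.of_separableSpace S).exists_countable_dense_subset
  have : Countable T := hT.to_subtype
  have hsup : ∀ x, sSup (f x '' S) = ⨆ p : T, f x p := fun x => by
    rw [← sSup_image', Real.sSup_eq_of_subset_of_subset_closure (image_mono hTS)
      ((image_mono hST).trans (image_closure_subset_closure_image (hcont x)))]
  simp_rw [hsup]
  exact Measurable.iSup fun p => hmeas p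

theorem ENNReal.ofReal_csSup {s : Set ℝ} (hne : s.Nonempty) (hbdd : BddAbove s) :
    ENNReal.ofReal (sSup s) = ⨆ y ∈ s, ENNReal.ofReal y := by
  rw [ENNReal.ofReal_mono.map_csSup_of_continuousAt ENNReal.continuous_ofReal.continuousAt
    hne hbdd, sSup_image]

theorem EuclideanSpace.norm_le_sqrt_mul_of_abs_le {d : ℕ} {v : EuclideanSpace ℝ (Fin d)} {k : ℝ}
    (hk : 0 ≤ k) (hv : ∀ i, |v i| ≤ k) : ‖v‖ ≤ √d * k := by
  have h := (EuclideanSpace.basisFun (Fin d) ℝ).norm_le_card_mul_iSup_norm_inner v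
  rw [Fintype.card_fin] at h
  refine h.trans (mul_le_mul_of_nonneg_left (Real.iSup_le (fun i => ?_) hk) (Real.sqrt_nonneg _))
  simpa [EuclideanSpace.inner_single_left] using hv i

section Pairing

variable {E : Type*} [NormedAddCommGroup E]

def conjSet (s : ℝ) : Set (ℝ × E) := {p | p.1 + (1 / s) * ‖p.2‖ ^ s ≤ 0}

theorem zero_mem_conjSet (s : ℝ) : (0 : ℝ × E) ∈ conjSet s := by
  rcases eq_or_ne s 0 with rfl | hs
  · simp [conjSet]
  · simp [conjSet, Real.zero_rpow hs]

variable [InnerProductSpace ℝ E]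

def pairing (a : ℝ) (b : E) (p : ℝ × E) : ℝ := p.1 * a + ⟪p.2, b⟫

theorem continuous_pairing (a : ℝ) (b : E) : Continuous (pairing a b) :=
  (continuous_fst.mul continuous_const).add (continuous_snd.inner continuous_const)

theorem pairing_le_of_mem_conjSet {r s : ℝ} (hc : r.HolderConjugate s) {a : ℝ} (ha : 0 < a)
    (b : E) {p : ℝ × E} (hp : p ∈ conjSet s) : pairing a b p ≤ 1 / r * ‖b‖ ^ r / a ^ (r - 1) := by
  obtain ⟨x, β⟩ := p
  have hβ : 0 ≤ ‖β‖ := norm_nonneg β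
  have hb : 0 ≤ ‖b‖ := norm_nonneg b
  -- Young's inequality for `‖β‖ a^{1/s}` and `‖b‖ a^{-1/s}`
  have young := Real.young_inequality_of_nonneg (mul_nonneg hβ (Real.rpow_nonneg ha.le (1 / s)))
    (mul_nonneg hb (Real.rpow_nonneg ha.le (-(1 / s)))) hc.symm
  have e₁ : ‖β‖ * a ^ (1 / s) * (‖b‖ * a ^ (-(1 / s))) = ‖β‖ * ‖b‖ := by
    rw [mul_mul_mul_comm, ← Real.rpow_add ha, add_neg_cancel, Real.rpow_zero, mul_one]
  have e₂ : (‖β‖ * a ^ (1 / s)) ^ s = ‖β‖ ^ s * a := by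
    rw [Real.mul_rpow hβ (Real.rpow_nonneg ha.le _), ← Real.rpow_mul ha.le,
      one_div_mul_cancel hc.symm.ne_zero, Real.rpow_one]
  have e₃ : (‖b‖ * a ^ (-(1 / s))) ^ r = ‖b‖ ^ r / a ^ (r - 1) := by
    rw [Real.mul_rpow hb (Real.rpow_nonneg ha.le _), ← Real.rpow_mul ha.le,
      show -(1 / s) * r = -(r - 1) by rw [← hc.div_conj_eq_sub_one]; ring,
      Real.rpow_neg ha.le, div_eq_mul_inv]
  rw [e₁, e₂, e₃] at young
  have hx : x * a ≤ -(1 / s * ‖β‖ ^ s) * a :=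
    mul_le_mul_of_nonneg_right (by simp only [conjSet, mem_ofPred_eq] at hp; linarith) ha.le
  have hinner := real_inner_le_norm β b
  simp only [pairing]
  linear_combination hx + hinner + young

theorem pairing_ray_mem_conjSet (s : ℝ) {b : E} (hb : b ≠ 0) {t : ℝ} (ht : 0 ≤ t) :
    (-(1 / s * t ^ s), (t / ‖b‖) • b) ∈ conjSet s := by
  simp [conjSet, norm_smul, abs_of_nonneg ht, hb]

theorem pairing_ray (a : ℝ) {b : E} (hb : b ≠ 0) (s t : ℝ) :
    pairing a b (-(1 / s * t ^ s), (t / ‖b‖) • b) = -(1 / s * t ^ s) * a + t * ‖b‖ := by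
  have : ‖b‖ ≠ 0 := norm_ne_zero_iff.2 hb
  simp only [pairing, real_inner_smul_left, real_inner_self_eq_norm_sq]
  field_simp

theorem exists_mem_conjSet_pairing_eq {r s : ℝ} (hc : r.HolderConjugate s) {a : ℝ} (ha : 0 < a)
    (b : E) : ∃ p ∈ conjSet s, pairing a b p = 1 / r * ‖b‖ ^ r / a ^ (r - 1) := by
  rcases eq_or_ne b 0 with rfl | hb
  · exact ⟨0, zero_mem_conjSet s, by simp [pairing, Real.zero_rpow hc.pos.ne']⟩
  have hW : 0 < ‖b‖ := norm_pos_iff.2 hb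
  refine ⟨_, pairing_ray_mem_conjSet s hb (t := (‖b‖ / a) ^ (r - 1)) (by positivity), ?_⟩
  rw [pairing_ray a hb, ← Real.rpow_mul (by positivity), hc.sub_one_mul_conj,
    Real.div_rpow hW.le ha.le, Real.div_rpow hW.le ha.le, Real.rpow_sub_one hW.ne',
    Real.rpow_sub_one ha.ne']
  field_simp
  linear_combination -hc.inv_add_inv_eq_one

theorem iSup_pairing_conjSet_eq_ellENN {r s : ℝ} (hc : r.HolderConjugate s) {d : ℕ} {a : ℝ}
    (ha : 0 ≤ a) (b : EuclideanSpace ℝ (Fin d)) :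
    ⨆ p ∈ conjSet s, ENNReal.ofReal (pairing a b p) = ellENN r d a b := by
  rcases ha.lt_or_eq with ha | rfl
  · rw [ellENN, if_pos ha]
    obtain ⟨p₀, hp₀, hval⟩ := exists_mem_conjSet_pairing_eq hc ha b
    refine le_antisymm (iSup₂_le fun p hp => ENNReal.ofReal_le_ofReal
      (pairing_le_of_mem_conjSet hc ha b hp)) ?_
    rw [← hval]
    exact le_iSup₂ (f := fun p _ => ENNReal.ofReal (pairing a b p)) p₀ hp₀
  rcases eq_or_ne b 0 with rfl | hb
  · simp [ellENN, pairing]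
  rw [ellENN, if_neg (lt_irrefl 0), if_neg (fun h => hb h.2)]
  refine ENNReal.eq_top_of_forall_nnreal_le fun c => ?_
  have hW : 0 < ‖b‖ := norm_pos_iff.2 hb
  have := le_iSup₂ (f := fun p _ => ENNReal.ofReal (pairing 0 b p)) _
    (pairing_ray_mem_conjSet s hb (t := c / ‖b‖) (by positivity))
  rwa [pairing_ray 0 hb, mul_zero, zero_add, div_mul_cancel₀ _ hW.ne', ENNReal.ofReal_coe_nnreal]
    at this

end Pairing

def truncSet (s : ℝ) (d k : ℕ) : Set (ℝ × EuclideanSpace ℝ (Fin d)) :=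
  {p | p.1 + (1 / s) * ‖p.2‖ ^ s ≤ 0 ∧ -(k : ℝ) ≤ p.1 ∧ ∀ i, |p.2 i| ≤ (k : ℝ)}

theorem zero_mem_truncSet {d : ℕ} (s : ℝ) (k : ℕ) :
    (0 : ℝ × EuclideanSpace ℝ (Fin d)) ∈ truncSet s d k :=
  ⟨zero_mem_conjSet s, by simp, by simp⟩

theorem truncSet_mono (s : ℝ) (d : ℕ) : Monotone (truncSet s d) := by
  intro k l hkl p ⟨hp, h₁, h₂⟩
  have hkl : (k : ℝ) ≤ l := Nat.cast_le.2 hkl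
  exact ⟨hp, by linarith, fun i => (h₂ i).trans hkl⟩

theorem iUnion_truncSet (s : ℝ) (d : ℕ) : ⋃ k, truncSet s d k = conjSet s := by
  refine subset_antisymm (iUnion_subset fun k p hp => hp.1) fun p hp => ?_
  obtain ⟨k, hk⟩ := exists_nat_ge (max (-p.1) ‖p.2‖)
  exact mem_iUnion.2 ⟨k, hp, by linarith [le_max_left (-p.1) ‖p.2‖],
    fun i => (PiLp.norm_apply_le p.2 i).trans ((le_max_right _ _).trans hk)⟩

theorem pairing_le_of_mem_truncSet {d : ℕ} {s : ℝ} (hs : 0 ≤ s) (a : ℝ)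
    (b : EuclideanSpace ℝ (Fin d)) {k : ℕ} {p : ℝ × EuclideanSpace ℝ (Fin d)}
    (hp : p ∈ truncSet s d k) :
    pairing a b p ≤ k * |a| + √d * k * ‖b‖ := by
  obtain ⟨hconj, hk, hcoord⟩ := hp
  have hp₁ : p.1 ≤ 0 := by
    have : 0 ≤ 1 / s * ‖p.2‖ ^ s := by positivity
    linarith
  have hp₂ : ‖p.2‖ ≤ √d * k :=
    EuclideanSpace.norm_le_sqrt_mul_of_abs_le (Nat.cast_nonneg k) hcoord
  calc pairing a b p ≤ |p.1| * |a| + ‖p.2‖ * ‖b‖ := by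
        rw [← abs_mul]
        exact add_le_add (le_abs_self _) (real_inner_le_norm _ _)
    _ ≤ k * |a| + √d * k * ‖b‖ := by
        gcongr
        exact abs_le.2 ⟨hk, hp₁.trans (Nat.cast_nonneg k)⟩

theorem bddAbove_pairing_image_truncSet {d : ℕ} {s : ℝ} (hs : 0 ≤ s) (a : ℝ)
    (b : EuclideanSpace ℝ (Fin d)) (k : ℕ) : BddAbove (pairing a b '' truncSet s d k) :=
  ⟨_, forall_mem_image.2 fun _ hp => pairing_le_of_mem_truncSet hs a b hp⟩

theorem monotone_sSup_pairing_image_truncSet {d : ℕ} {s : ℝ} (hs : 0 ≤ s) (a : ℝ)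
    (b : EuclideanSpace ℝ (Fin d)) : Monotone fun k => sSup (pairing a b '' truncSet s d k) :=
  fun _ l hkl => csSup_le_csSup (bddAbove_pairing_image_truncSet hs a b l)
    ⟨_, mem_image_of_mem _ (zero_mem_truncSet s _)⟩ (image_mono (truncSet_mono s d hkl))

theorem iSup_ofReal_sSup_pairing_image_truncSet {d : ℕ} {s : ℝ} (hs : 0 ≤ s) (a : ℝ)
    (b : EuclideanSpace ℝ (Fin d)) :
    ⨆ k : ℕ, ENNReal.ofReal (sSup (pairing a b '' truncSet s d k)) =
      ⨆ p ∈ conjSet s, ENNReal.ofReal (pairing a b p) := by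
  simp_rw [ENNReal.ofReal_csSup ⟨_, mem_image_of_mem _ (zero_mem_truncSet s _)⟩
    (bddAbove_pairing_image_truncSet hs a b _), iSup_image]
  rw [← iUnion_truncSet s d, iSup_iUnion]

theorem stmt_2_general (r : ℝ) (hr : 1 < r) (d : ℕ)
    (Ω : Set (EuclideanSpace ℝ (Fin d)))
    (m : EuclideanSpace ℝ (Fin d) → ℝ)
    (w : EuclideanSpace ℝ (Fin d) → EuclideanSpace ℝ (Fin d))
    (hm : Measurable m) (hw : Measurable w)
    (hm0 : ∀ᵐ x ∂volume.restrict Ω, 0 ≤ m x) :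
    let r' : ℝ := r / (r - 1)
    let A : ℕ → Set (ℝ × EuclideanSpace ℝ (Fin d)) := fun k =>
      {p | p.1 + (1 / r') * ‖p.2‖ ^ r' ≤ 0 ∧ -(k : ℝ) ≤ p.1 ∧ ∀ i, |p.2 i| ≤ (k : ℝ)}
    let I : ℕ → ℝ≥0∞ := fun k => ∫⁻ x in Ω, ENNReal.ofReal
      (sSup ((fun p : ℝ × EuclideanSpace ℝ (Fin d) => p.1 * m x + ⟪p.2, w x⟫) '' A k))
    Monotone I ∧ Tendsto I atTop (𝓝 (∫⁻ x in Ω, ellENN r d (m x) (w x))) := by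
  intro r' A I
  have hc : r.HolderConjugate r' := (Real.holderConjugate_iff_eq_conjExponent hr).2 rfl
  set F : ℕ → EuclideanSpace ℝ (Fin d) → ℝ≥0∞ :=
    fun k x => ENNReal.ofReal (sSup (pairing (m x) (w x) '' truncSet r' d k))
  have hF_meas (k : ℕ) : Measurable (F k) :=
    ENNReal.measurable_ofReal.comp <| measurable_sSup_image
      (fun p : ℝ × EuclideanSpace ℝ (Fin d) => (hm.const_mul p.1).add (measurable_const.inner hw))
      (fun x => continuous_pairing (m x) (w x)) _
  have hF_mono : Monotone F := fun k l hkl x => ENNReal.ofReal_le_ofReal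
    (monotone_sSup_pairing_image_truncSet hc.symm.nonneg (m x) (w x) hkl)
  have hI : I = fun k => ∫⁻ x in Ω, F k x := rfl
  have hI_mono : Monotone I := fun k l hkl => lintegral_mono (hF_mono hkl)
  have hlim : ∫⁻ x in Ω, ellENN r d (m x) (w x) = ⨆ k, I k := by
    rw [hI, ← lintegral_iSup hF_meas hF_mono]
    refine lintegral_congr_ae (hm0.mono fun x hx => ?_)
    exact ((iSup_ofReal_sSup_pairing_image_truncSet hc.symm.nonneg (m x) (w x)).trans
      (iSup_pairing_conjSet_eq_ellENN hc hx (w x))).symm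
  exact ⟨hI_mono, hlim ▸ tendsto_atTop_iSup hI_mono⟩

/-- Monotone convergence of the truncated suprema: with
`A_{r',k} = {(a,b) : a + (1/r')|b|^{r'} ≤ 0, a ≥ -k, max_i |b_i| ≤ k}`, the integrals
`∫_Ω sup_{(a,b)∈A_{r',k}} (a m(x) + b·w(x)) dx` form a nondecreasing sequence whose limit is
`∫_Ω ℓ_r(m(x),w(x)) dx`. -/
theorem stmt_2 (r : ℝ) (hr : 1 < r) (d : ℕ)
    (Ω : Set (EuclideanSpace ℝ (Fin d))) (hΩ : MeasurableSet Ω) (hfin : volume Ω < ⊤)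
    (m : EuclideanSpace ℝ (Fin d) → ℝ)
    (w : EuclideanSpace ℝ (Fin d) → EuclideanSpace ℝ (Fin d))
    (hm : Measurable m) (hw : Measurable w)
    (hm0 : ∀ᵐ x ∂volume.restrict Ω, 0 ≤ m x) :
    let r' : ℝ := r / (r - 1)
    let A : ℕ → Set (ℝ × EuclideanSpace ℝ (Fin d)) := fun k =>
      {p | p.1 + (1 / r') * ‖p.2‖ ^ r' ≤ 0 ∧ -(k : ℝ) ≤ p.1 ∧ ∀ i, |p.2 i| ≤ (k : ℝ)}
    let I : ℕ → ℝ≥0∞ := fun k => ∫⁻ x in Ω, ENNReal.ofReal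
      (sSup ((fun p : ℝ × EuclideanSpace ℝ (Fin d) => p.1 * m x + ⟪p.2, w x⟫) '' A k))
    Monotone I ∧ Tendsto I atTop (𝓝 (∫⁻ x in Ω, ellENN r d (m x) (w x))) :=
  stmt_2_general r hr d Ω m w hm hw hm0
end

section
/- Let Ω ⊂ ℝ^d be a bounded measurable set, 1 < r ≤ q, r' := r/(r-1). Then for every m ∈ L^q(Ω) and w ∈ L^q(Ω;ℝ^d) one has, as extended reals, ∫_Ω ℓ_r(m(x),w(x)) dx = sup{ ∫_Ω ( a(x) m(x) + b(x)·w(x) ) dx : a ∈ L^∞(Ω), b ∈ L^∞(Ω;ℝ^d), a(x) + (1/r')|b(x)|^{r'} ≤ 0 for a.e. x ∈ Ω }. -/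
open MeasureTheory
open scoped RealInnerProductSpace Classical ENNReal

section Pointwise

variable {E : Type*} [NormedAddCommGroup E] [InnerProductSpace ℝ E] {r r' a : ℝ}

lemma div_rpow_sub_one_eq_div_rpow_mul {s : ℝ} (ha : 0 < a) (hs : 0 ≤ s) :
    s ^ r / a ^ (r - 1) = (s / a) ^ r * a := by
  rw [Real.div_rpow hs ha.le, Real.rpow_sub_one ha.ne']
  field_simp

lemma mul_le_young_perspective (hr : r.HolderConjugate r') {s t : ℝ} (ha : 0 < a)
    (hs : 0 ≤ s) (ht : 0 ≤ t) :
    t * s ≤ 1 / r' * t ^ r' * a + 1 / r * s ^ r / a ^ (r - 1) := by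
  have hc : 0 < a ^ (1 / r') := by positivity
  have young := Real.young_inequality_of_nonneg (div_nonneg hs hc.le)
    (mul_nonneg ht hc.le) hr
  have hs_pow : (s / a ^ (1 / r')) ^ r = s ^ r / a ^ (r - 1) := by
    rw [Real.div_rpow hs hc.le, ← Real.rpow_mul ha.le, ← hr.div_conj_eq_sub_one,
      one_div_mul_eq_div]
  have ht_pow : (t * a ^ (1 / r')) ^ r' = t ^ r' * a := by
    rw [Real.mul_rpow ht hc.le, ← Real.rpow_mul ha.le, one_div_mul_cancel hr.symm.ne_zero,
      Real.rpow_one]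
  have hprod : s / a ^ (1 / r') * (t * a ^ (1 / r')) = t * s := by field_simp
  rw [hs_pow, ht_pow, hprod] at young
  exact young.trans_eq (by ring)

lemma mul_add_inner_le_of_add_le_zero (hr : r.HolderConjugate r') (ha : 0 < a) {α : ℝ} {β b : E}
    (hαβ : α + 1 / r' * ‖β‖ ^ r' ≤ 0) :
    α * a + ⟪β, b⟫ ≤ 1 / r * ‖b‖ ^ r / a ^ (r - 1) := by
  have hα : α * a ≤ -(1 / r' * ‖β‖ ^ r') * a := by gcongr; linarith
  have := mul_le_young_perspective hr ha (norm_nonneg b) (norm_nonneg β)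
  linarith [real_inner_le_norm β b]

/-- The maximiser of `β ↦ α a + ⟪β, b⟫` subject to `α + ‖β‖ ^ r' / r' ≤ 0`, for `a > 0`. -/
noncomputable def optDual (r a : ℝ) (b : E) : E := ((‖b‖ / a) ^ (r - 1) * ‖b‖⁻¹) • b

lemma norm_optDual (hr : 1 < r) (ha : 0 ≤ a) (b : E) :
    ‖optDual r a b‖ = (‖b‖ / a) ^ (r - 1) := by
  rcases eq_or_ne b 0 with rfl | hb
  · simp [optDual, Real.zero_rpow (sub_ne_zero.2 hr.ne')]
  · rw [optDual, norm_smul, Real.norm_eq_abs, abs_of_nonneg (by positivity), mul_assoc,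
      inv_mul_cancel₀ (norm_ne_zero_iff.2 hb), mul_one]

lemma inner_optDual (hr : 1 < r) (ha : 0 < a) (b : E) :
    ⟪optDual r a b, b⟫ = (‖b‖ / a) ^ r * a := by
  have hb : ‖b‖ = ‖b‖ / a * a := by field_simp
  rw [optDual, real_inner_smul_left, real_inner_self_eq_norm_sq]
  rcases eq_or_ne ‖b‖ 0 with h0 | h0
  · simp [h0, Real.zero_rpow (by linarith : r ≠ 0)]
  · conv_rhs => rw [show r = (r - 1) + 1 by ring,
      Real.rpow_add' (by positivity) (by simp; linarith), Real.rpow_one, mul_assoc, ← hb]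
    field_simp

lemma optDual_value (hr : r.HolderConjugate r') (ha : 0 < a) (b : E) :
    -(1 / r' * ‖optDual r a b‖ ^ r') * a + ⟪optDual r a b, b⟫ = 1 / r * ‖b‖ ^ r / a ^ (r - 1) := by
  rw [inner_optDual hr.lt ha, norm_optDual hr.lt ha.le, ← Real.rpow_mul (by positivity),
    hr.sub_one_mul_conj, mul_div_assoc, div_rpow_sub_one_eq_div_rpow_mul ha (norm_nonneg b)]
  linear_combination (-((‖b‖ / a) ^ r * a)) * hr.inv_add_inv_eq_one

/-- The `n`-th dual pair `(α, β)`: bounded in terms of `n`, and with value `α a + ⟪β, b⟫`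
converging to `ℓ_r(a, b)`. -/
noncomputable def approxDualB (r : ℝ) (n : ℕ) (a : ℝ) (b : E) : E :=
  if 1 / (n + 1) < a ∧ ‖b‖ ≤ n then optDual r a b
  else if a = 0 then ((n : ℝ) * ‖b‖⁻¹) • b else 0

noncomputable def approxDualA (r r' : ℝ) (n : ℕ) (a : ℝ) (b : E) : ℝ :=
  -(1 / r' * ‖approxDualB r n a b‖ ^ r') - if a < 0 then (n : ℝ) else 0

lemma approxDualA_add_le_zero (n : ℕ) (b : E) :
    approxDualA r r' n a b + 1 / r' * ‖approxDualB r n a b‖ ^ r' ≤ 0 := by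
  unfold approxDualA
  split_ifs <;> linarith [(n.cast_nonneg : (0 : ℝ) ≤ n)]

lemma norm_approxDualB_le (hr : 1 < r) (n : ℕ) (b : E) :
    ‖approxDualB r n a b‖ ≤ ((n : ℝ) * (n + 1)) ^ (r - 1) + n := by
  have hpow : 0 ≤ ((n : ℝ) * (n + 1)) ^ (r - 1) := by positivity
  unfold approxDualB
  split_ifs with htrunc ha
  · obtain ⟨ha, hb⟩ := htrunc
    have ha0 : 0 < a := lt_trans (by positivity) ha
    have hba : ‖b‖ / a ≤ n * (n + 1) := by
      rw [div_lt_iff₀ (by positivity)] at ha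
      rw [div_le_iff₀ ha0]
      nlinarith [norm_nonneg b]
    rw [norm_optDual hr ha0.le]
    have := Real.rpow_le_rpow (by positivity) hba (by linarith : 0 ≤ r - 1)
    linarith [(n.cast_nonneg : (0 : ℝ) ≤ n)]
  · rw [norm_smul, Real.norm_eq_abs, abs_of_nonneg (by positivity), mul_assoc]
    have : ‖b‖⁻¹ * ‖b‖ ≤ 1 := by
      rcases eq_or_ne ‖b‖ 0 with h | h <;> simp [h]
    nlinarith [(n.cast_nonneg : (0 : ℝ) ≤ n)]
  · simp only [norm_zero]; positivity

lemma abs_approxDualA_le (hr : r.HolderConjugate r') (n : ℕ) (b : E) :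
    |approxDualA r r' n a b| ≤ 1 / r' * (((n : ℝ) * (n + 1)) ^ (r - 1) + n) ^ r' + n := by
  have h0 : 0 ≤ 1 / r' * ‖approxDualB r n a b‖ ^ r' := by
    have := hr.symm.pos; positivity
  have h1 : 1 / r' * ‖approxDualB r n a b‖ ^ r' ≤
      1 / r' * (((n : ℝ) * (n + 1)) ^ (r - 1) + n) ^ r' := by
    have := hr.symm.pos
    gcongr
    exact norm_approxDualB_le hr.lt n b
  unfold approxDualA
  rw [abs_le]
  split_ifs <;> constructor <;> linarith [(n.cast_nonneg : (0 : ℝ) ≤ n)]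

lemma exists_bound_approxDual (hr : r.HolderConjugate r') (n : ℕ) :
    ∃ C, ∀ a (b : E), |approxDualA r r' n a b| ≤ C ∧ ‖approxDualB r n a b‖ ≤ C :=
  ⟨_, fun _ b => ⟨(abs_approxDualA_le hr n b).trans (le_max_left _ _),
    (norm_approxDualB_le hr.lt n b).trans (le_max_right _ _)⟩⟩

lemma approxDualB_of_not_lt_of_ne_zero {n : ℕ} {b : E} (htrunc : ¬ (1 / (n + 1) < a ∧ ‖b‖ ≤ n))
    (ha : a ≠ 0) : approxDualB r n a b = 0 := by
  rw [approxDualB, if_neg htrunc, if_neg ha]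

lemma approxDual_value_of_lt_of_le (hr : r.HolderConjugate r') {n : ℕ} {b : E}
    (ha : 1 / (n + 1) < a) (hb : ‖b‖ ≤ n) :
    approxDualA r r' n a b * a + ⟪approxDualB r n a b, b⟫ = 1 / r * ‖b‖ ^ r / a ^ (r - 1) := by
  have ha0 : 0 < a := lt_trans (by positivity) ha
  rw [approxDualA, if_neg ha0.not_gt, sub_zero, approxDualB, if_pos ⟨ha, hb⟩]
  exact optDual_value hr ha0 b

lemma approxDual_value_of_zero (n : ℕ) (b : E) :
    approxDualA r r' n 0 b * 0 + ⟪approxDualB r n 0 b, b⟫ = n * ‖b‖ := by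
  have : ¬ (1 / ((n : ℝ) + 1) < 0 ∧ ‖b‖ ≤ n) := fun h => (h.1.trans' (by positivity)).false
  rw [mul_zero, zero_add, approxDualB, if_neg this, if_pos rfl, real_inner_smul_left,
    real_inner_self_eq_norm_sq]
  rcases eq_or_ne ‖b‖ 0 with h | h
  · simp [h]
  · field_simp

lemma approxDual_value_of_neg (hr' : r' ≠ 0) (n : ℕ) (b : E) (ha : a < 0) :
    approxDualA r r' n a b * a + ⟪approxDualB r n a b, b⟫ = n * -a := by
  have : ¬ (1 / ((n : ℝ) + 1) < a ∧ ‖b‖ ≤ n) := fun h => (h.1.trans ha).not_ge (by positivity)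
  rw [approxDualA, if_pos ha, approxDualB_of_not_lt_of_ne_zero this ha.ne]
  simp [Real.zero_rpow hr']

lemma approxDual_value_nonneg (hr : r.HolderConjugate r') (n : ℕ) (b : E) :
    0 ≤ approxDualA r r' n a b * a + ⟪approxDualB r n a b, b⟫ := by
  by_cases htrunc : 1 / ((n : ℝ) + 1) < a ∧ ‖b‖ ≤ n
  · rw [approxDual_value_of_lt_of_le hr htrunc.1 htrunc.2]
    have := lt_trans (by positivity) htrunc.1
    have := hr.pos
    positivity
  rcases lt_trichotomy a 0 with ha | rfl | ha
  · rw [approxDual_value_of_neg hr.symm.ne_zero n b ha]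
    have := neg_pos.2 ha
    positivity
  · rw [approxDual_value_of_zero]; positivity
  · rw [approxDualA, if_neg ha.not_gt, approxDualB_of_not_lt_of_ne_zero htrunc ha.ne']
    simp [Real.zero_rpow hr.symm.ne_zero]

end Pointwise

section Ell

open Filter Topology

variable {d : ℕ} {r r' a : ℝ} {b : EuclideanSpace ℝ (Fin d)}

lemma ellENN_of_pos (ha : 0 < a) :
    ellENN r d a b = ENNReal.ofReal (1 / r * ‖b‖ ^ r / a ^ (r - 1)) :=
  if_pos ha

lemma ellENN_of_neg (ha : a < 0) : ellENN r d a b = ⊤ := by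
  simp [ellENN, ha.not_gt, ha.ne]

lemma ellENN_zero_of_ne_zero (hb : b ≠ 0) : ellENN r d 0 b = ⊤ := by
  simp [ellENN, hb]

lemma ellENN_zero_zero : ellENN r d 0 0 = 0 := by
  simp [ellENN]

lemma ofReal_le_ellENN (hr : r.HolderConjugate r') {α : ℝ} {β : EuclideanSpace ℝ (Fin d)}
    (hαβ : α + 1 / r' * ‖β‖ ^ r' ≤ 0) : ENNReal.ofReal (α * a + ⟪β, b⟫) ≤ ellENN r d a b := by
  rcases lt_trichotomy a 0 with ha | rfl | ha
  · simp [ellENN_of_neg ha]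
  · rcases eq_or_ne b 0 with rfl | hb
    · simp [ellENN_zero_zero]
    · simp [ellENN_zero_of_ne_zero hb]
  · rw [ellENN_of_pos ha]
    exact ENNReal.ofReal_le_ofReal (mul_add_inner_le_of_add_le_zero hr ha hαβ)

lemma tendsto_ofReal_approxDual_value (hr : r.HolderConjugate r') (a : ℝ)
    (b : EuclideanSpace ℝ (Fin d)) :
    Tendsto (fun n : ℕ => ENNReal.ofReal (approxDualA r r' n a b * a + ⟪approxDualB r n a b, b⟫))
      atTop (𝓝 (ellENN r d a b)) := by
  rcases lt_trichotomy a 0 with ha | rfl | ha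
  · simp_rw [approxDual_value_of_neg hr.symm.ne_zero _ b ha, ellENN_of_neg ha]
    exact ENNReal.tendsto_ofReal_atTop.comp
      (tendsto_natCast_atTop_atTop.atTop_mul_const (neg_pos.2 ha))
  · simp_rw [approxDual_value_of_zero]
    rcases eq_or_ne b 0 with rfl | hb
    · simp [ellENN_zero_zero]
    · rw [ellENN_zero_of_ne_zero hb]
      exact ENNReal.tendsto_ofReal_atTop.comp
        (tendsto_natCast_atTop_atTop.atTop_mul_const (norm_pos_iff.2 hb))
  · have htrunc : ∀ᶠ n : ℕ in atTop, 1 / ((n : ℝ) + 1) < a ∧ ‖b‖ ≤ n :=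
      (tendsto_one_div_add_atTop_nhds_zero_nat.eventually (gt_mem_nhds ha)).and
        (tendsto_natCast_atTop_atTop.eventually_ge_atTop ‖b‖)
    rw [ellENN_of_pos ha]
    refine tendsto_const_nhds.congr' (htrunc.mono fun n hn => ?_)
    simp only [approxDual_value_of_lt_of_le hr hn.1 hn.2]

end Ell

section Integral

open Filter

def dualValues {X : Type*} [MeasurableSpace X] {d : ℕ} (μ : Measure X) (r' : ℝ) (m : X → ℝ)
    (w : X → EuclideanSpace ℝ (Fin d)) : Set EReal :=
  {y : EReal | ∃ a : X → ℝ, ∃ b : X → EuclideanSpace ℝ (Fin d),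
    Measurable a ∧ Measurable b ∧
    (∃ C : ℝ, ∀ᵐ x ∂μ, |a x| ≤ C ∧ ‖b x‖ ≤ C) ∧
    (∀ᵐ x ∂μ, a x + (1 / r') * ‖b x‖ ^ r' ≤ 0) ∧
    y = ((∫ x, (a x * m x + ⟪b x, w x⟫) ∂μ : ℝ) : EReal)}

variable {X : Type*} [MeasurableSpace X] {μ : Measure X} {d : ℕ} {r r' : ℝ}
  {m : X → ℝ} {w : X → EuclideanSpace ℝ (Fin d)}

lemma dualValues_congr_ae {m' : X → ℝ} {w' : X → EuclideanSpace ℝ (Fin d)}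
    (hm : m =ᵐ[μ] m') (hw : w =ᵐ[μ] w') : dualValues μ r' m w = dualValues μ r' m' w' := by
  have hint : ∀ (a : X → ℝ) (b : X → EuclideanSpace ℝ (Fin d)),
      ∫ x, (a x * m x + ⟪b x, w x⟫) ∂μ = ∫ x, (a x * m' x + ⟪b x, w' x⟫) ∂μ := fun a b =>
    integral_congr_ae (by filter_upwards [hm, hw] with x hmx hwx; rw [hmx, hwx])
  simp only [dualValues, hint]

lemma coe_integral_le_lintegral_ofReal (f : X → ℝ) :
    ((∫ x, f x ∂μ : ℝ) : EReal) ≤ ((∫⁻ x, ENNReal.ofReal (f x) ∂μ : ℝ≥0∞) : EReal) := by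
  by_cases hf : Integrable f μ
  · rcases eq_or_ne (∫⁻ x, ENNReal.ofReal (f x) ∂μ) ⊤ with htop | htop
    · simp [htop]
    rw [← EReal.coe_ennreal_toReal htop, EReal.coe_le_coe_iff,
      integral_eq_lintegral_pos_part_sub_lintegral_neg_part hf]
    exact sub_le_self _ ENNReal.toReal_nonneg
  · rw [integral_undef hf]
    exact EReal.coe_ennreal_nonneg _

lemma sSup_dualValues_le_lintegral_ellENN (hr : r.HolderConjugate r') :
    sSup (dualValues μ r' m w) ≤ ((∫⁻ x, ellENN r d (m x) (w x) ∂μ : ℝ≥0∞) : EReal) := by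
  refine sSup_le ?_
  rintro y ⟨a, b, -, -, -, hab, rfl⟩
  refine (coe_integral_le_lintegral_ofReal _).trans (EReal.coe_ennreal_le_coe_ennreal_iff.2 ?_)
  exact lintegral_mono_ae (hab.mono fun x hx => ofReal_le_ellENN hr hx)

lemma integrable_mul_add_inner {a : X → ℝ} {b : X → EuclideanSpace ℝ (Fin d)} {C : ℝ}
    (hm : Integrable m μ) (hw : Integrable w μ) (ha : AEStronglyMeasurable a μ)
    (hb : AEStronglyMeasurable b μ) (hC : ∀ᵐ x ∂μ, |a x| ≤ C ∧ ‖b x‖ ≤ C) :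
    Integrable (fun x => a x * m x + ⟪b x, w x⟫) μ := by
  refine (hm.bdd_mul ha (hC.mono fun x hx => hx.1)).add ?_
  refine (hw.norm.const_mul C).mono' (hb.inner hw.aestronglyMeasurable) ?_
  filter_upwards [hC] with x hx
  exact (norm_inner_le_norm _ _).trans (by gcongr; exact hx.2)

lemma Measurable.approxDualB (hm : Measurable m) (hw : Measurable w) (n : ℕ) :
    Measurable fun x => approxDualB r n (m x) (w x) := by
  have hopt : Measurable fun x => optDual r (m x) (w x) :=
    (((hw.norm.div hm).pow_const _).mul hw.norm.inv).smul hw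
  refine Measurable.ite ((measurableSet_lt measurable_const hm).inter
    (measurableSet_le hw.norm measurable_const)) hopt ?_
  exact Measurable.ite (measurableSet_eq_fun hm measurable_const)
    ((measurable_const.mul hw.norm.inv).smul hw) measurable_const

lemma Measurable.approxDualA (hm : Measurable m) (hw : Measurable w) (n : ℕ) :
    Measurable fun x => approxDualA r r' n (m x) (w x) :=
  (measurable_const.mul ((hm.approxDualB hw n).norm.pow_const _)).neg.sub
    (Measurable.ite (measurableSet_lt hm measurable_const) measurable_const measurable_const)

lemma approxDual_mem_dualValues (hr : r.HolderConjugate r') (hm : Measurable m)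
    (hw : Measurable w) (n : ℕ) :
    ((∫ x, (approxDualA r r' n (m x) (w x) * m x + ⟪approxDualB r n (m x) (w x), w x⟫) ∂μ : ℝ) :
      EReal) ∈ dualValues μ r' m w :=
  ⟨_, _, hm.approxDualA hw n, hm.approxDualB hw n,
    (exists_bound_approxDual hr n).imp fun _ hC => ae_of_all _ fun x => hC (m x) (w x),
    ae_of_all _ fun x => approxDualA_add_le_zero n (w x), rfl⟩

lemma lintegral_ellENN_le_sSup_dualValues (hr : r.HolderConjugate r') (hm : Measurable m)
    (hw : Measurable w) (hmi : Integrable m μ) (hwi : Integrable w μ) :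
    ((∫⁻ x, ellENN r d (m x) (w x) ∂μ : ℝ≥0∞) : EReal) ≤ sSup (dualValues μ r' m w) := by
  set v : ℕ → X → ℝ := fun n x =>
    approxDualA r r' n (m x) (w x) * m x + ⟪approxDualB r n (m x) (w x), w x⟫
  have hv : ∀ n,
      ((∫⁻ x, ENNReal.ofReal (v n x) ∂μ : ℝ≥0∞) : EReal) ≤ sSup (dualValues μ r' m w) := by
    intro n
    have hv0 : ∀ x, 0 ≤ v n x := fun x => approxDual_value_nonneg hr n (w x)
    have hint : Integrable (v n) μ := by
      obtain ⟨C, hC⟩ := exists_bound_approxDual (E := EuclideanSpace ℝ (Fin d)) hr n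
      exact integrable_mul_add_inner hmi hwi (hm.approxDualA hw n).aestronglyMeasurable
        (hm.approxDualB hw n).aestronglyMeasurable (ae_of_all _ fun x => hC (m x) (w x))
    rw [← ofReal_integral_eq_lintegral_ofReal hint (ae_of_all _ hv0), EReal.coe_ennreal_ofReal,
      max_eq_left (integral_nonneg hv0)]
    exact le_sSup (approxDual_mem_dualValues hr hm hw n)
  have hs : 0 ≤ sSup (dualValues μ r' m w) := (EReal.coe_ennreal_nonneg _).trans (hv 0)
  rw [← EReal.coe_toENNReal hs, EReal.coe_ennreal_le_coe_ennreal_iff]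
  calc ∫⁻ x, ellENN r d (m x) (w x) ∂μ
      = ∫⁻ x, liminf (fun n => ENNReal.ofReal (v n x)) atTop ∂μ :=
        lintegral_congr fun x => (tendsto_ofReal_approxDual_value hr (m x) (w x)).liminf_eq.symm
    _ ≤ liminf (fun n => ∫⁻ x, ENNReal.ofReal (v n x) ∂μ) atTop :=
        lintegral_liminf_le fun n =>
          (((hm.approxDualA hw n).mul hm).add ((hm.approxDualB hw n).inner hw)).ennreal_ofReal
    _ ≤ (sSup (dualValues μ r' m w)).toENNReal :=
        liminf_le_of_frequently_le' (Frequently.of_forall fun n => by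
          rw [← EReal.coe_ennreal_le_coe_ennreal_iff, EReal.coe_toENNReal hs]
          exact hv n)

theorem lintegral_ellENN_eq_sSup_dualValues (hr : r.HolderConjugate r') (hm : Integrable m μ)
    (hw : Integrable w μ) :
    ((∫⁻ x, ellENN r d (m x) (w x) ∂μ : ℝ≥0∞) : EReal) = sSup (dualValues μ r' m w) := by
  obtain ⟨m', hm'meas, hmm'⟩ := hm.aemeasurable
  obtain ⟨w', hw'meas, hww'⟩ := hw.aemeasurable
  rw [lintegral_congr_ae (by filter_upwards [hmm', hww'] with x hmx hwx; rw [hmx, hwx]),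
    dualValues_congr_ae hmm' hww']
  exact le_antisymm
    (lintegral_ellENN_le_sSup_dualValues hr hm'meas hw'meas (hm.congr hmm') (hw.congr hww'))
    (sSup_dualValues_le_lintegral_ellENN hr)

end Integral

theorem stmt_3_general (d : ℕ) (Ω : Set (EuclideanSpace ℝ (Fin d)))
    (hΩbdd : Bornology.IsBounded Ω)
    (q r : ℝ) (hr : 1 < r) (hrq : r ≤ q)
    (m : EuclideanSpace ℝ (Fin d) → ℝ)
    (w : EuclideanSpace ℝ (Fin d) → EuclideanSpace ℝ (Fin d))
    (hm : MemLp m (ENNReal.ofReal q) (volume.restrict Ω))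
    (hw : MemLp w (ENNReal.ofReal q) (volume.restrict Ω)) :
    ((∫⁻ x in Ω, ellENN r d (m x) (w x) : ℝ≥0∞) : EReal) =
      sSup {y : EReal | ∃ a : EuclideanSpace ℝ (Fin d) → ℝ,
        ∃ b : EuclideanSpace ℝ (Fin d) → EuclideanSpace ℝ (Fin d),
        Measurable a ∧ Measurable b ∧
        (∃ C : ℝ, ∀ᵐ x ∂volume.restrict Ω, |a x| ≤ C ∧ ‖b x‖ ≤ C) ∧
        (∀ᵐ x ∂volume.restrict Ω,
          a x + (1 / (r / (r - 1))) * ‖b x‖ ^ (r / (r - 1)) ≤ 0) ∧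
        y = ((∫ x in Ω, (a x * m x + ⟪b x, w x⟫) : ℝ) : EReal)} := by
  have : IsFiniteMeasure (volume.restrict Ω) := isFiniteMeasure_restrict.2 hΩbdd.measure_lt_top.ne
  have hq : 1 ≤ ENNReal.ofReal q := ENNReal.one_le_ofReal.2 (by linarith)
  exact lintegral_ellENN_eq_sSup_dualValues (Real.HolderConjugate.conjExponent hr)
    (hm.integrable hq) (hw.integrable hq)

/-- For `Ω ⊂ ℝ^d` bounded measurable, `1 < r ≤ q`, `r' = r/(r-1)`, `m ∈ L^q(Ω)` and
`w ∈ L^q(Ω;ℝ^d)`, one has, as extended reals,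
`∫_Ω ℓ_r(m,w) dx = sup { ∫_Ω (a m + b·w) dx : a ∈ L^∞, b ∈ L^∞, a + (1/r')|b|^{r'} ≤ 0 a.e. }`. -/
theorem stmt_3 (d : ℕ) (Ω : Set (EuclideanSpace ℝ (Fin d)))
    (hΩmeas : MeasurableSet Ω) (hΩbdd : Bornology.IsBounded Ω)
    (q r : ℝ) (hr : 1 < r) (hrq : r ≤ q)
    (m : EuclideanSpace ℝ (Fin d) → ℝ)
    (w : EuclideanSpace ℝ (Fin d) → EuclideanSpace ℝ (Fin d))
    (hm : MemLp m (ENNReal.ofReal q) (volume.restrict Ω))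
    (hw : MemLp w (ENNReal.ofReal q) (volume.restrict Ω)) :
    ((∫⁻ x in Ω, ellENN r d (m x) (w x) : ℝ≥0∞) : EReal) =
      sSup {y : EReal | ∃ a : EuclideanSpace ℝ (Fin d) → ℝ,
        ∃ b : EuclideanSpace ℝ (Fin d) → EuclideanSpace ℝ (Fin d),
        Measurable a ∧ Measurable b ∧
        (∃ C : ℝ, ∀ᵐ x ∂volume.restrict Ω, |a x| ≤ C ∧ ‖b x‖ ≤ C) ∧
        (∀ᵐ x ∂volume.restrict Ω,
          a x + (1 / (r / (r - 1))) * ‖b x‖ ^ (r / (r - 1)) ≤ 0) ∧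
        y = ((∫ x in Ω, (a x * m x + ⟪b x, w x⟫) : ℝ) : EReal)} :=
  stmt_3_general d Ω hΩbdd q r hr hrq m w hm hw
end

section
/- Let Ω ⊂ ℝ^d be a nonempty bounded open set with closure Ω̄ and let r' > 1. Let α_n ∈ L^∞(Ω) and β_n ∈ L^∞(Ω;ℝ^d) satisfy α_n(x) + (1/r')|β_n(x)|^{r'} ≤ 0 for a.e. x ∈ Ω, for every n. Suppose β_n → β in L^{r'}(Ω;ℝ^d), and that there is a finite signed Borel measure α on Ω̄ such that ∫_Ω φ(x) α_n(x) dx → ∫_{Ω̄} φ dα for every continuous φ : Ω̄ → ℝ. Then for every nonnegative continuous φ : Ω̄ → ℝ one has ∫_{Ω̄} φ dα + (1/r') ∫_Ω φ(x)|β(x)|^{r'} dx ≤ 0. -/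
open MeasureTheory Filter
open scoped RealInnerProductSpace ENNReal Topology

/-- The integral of a function against a finite signed measure, via its Jordan
decomposition: `∫ φ dα := ∫ φ dα⁺ - ∫ φ dα⁻`. -/
noncomputable def signedIntegral {E : Type*} [MeasurableSpace E]
    (α : SignedMeasure E) (φ : E → ℝ) : ℝ :=
  (∫ x, φ x ∂α.toJordanDecomposition.posPart) -
    ∫ x, φ x ∂α.toJordanDecomposition.negPart

/-! Testing the constraint `α_n + |β_n|^{r'}/r' ≤ 0` against `φ ≥ 0` gives
`∫ φ |β_n|^{r'} ≤ -r' ∫ φ α_n`. Along a subsequence `β_n → β` a.e., so Fatou's lemma bounds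
`∫ φ |β|^{r'}` by the liminf of the left-hand sides, while the right-hand sides converge to
`-r' ∫ φ dα` by the weak-* convergence of `α_n`. -/

namespace MeasureTheory

variable {X : Type*} [MeasurableSpace X] {μ : Measure X}

theorem integral_le_of_tendsto_ae_of_integral_le {f : ℕ → X → ℝ} {g : X → ℝ} {u : ℕ → ℝ}
    {L : ℝ} (hf_int : ∀ n, Integrable (f n) μ) (hf_nonneg : ∀ n, 0 ≤ᵐ[μ] f n)
    (hfg : ∀ᵐ x ∂μ, Tendsto (fun n => f n x) atTop (𝓝 (g x)))
    (hfu : ∀ n, ∫ x, f n x ∂μ ≤ u n) (hu : Tendsto u atTop (𝓝 L)) :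
    ∫ x, g x ∂μ ≤ L := by
  have hL : 0 ≤ L :=
    ge_of_tendsto' hu fun n => (integral_nonneg_of_ae (hf_nonneg n)).trans (hfu n)
  have hg_nonneg : 0 ≤ᵐ[μ] g := by
    filter_upwards [hfg, ae_all_iff.2 hf_nonneg] with x hx hnonneg
    exact ge_of_tendsto' hx hnonneg
  have hg_meas : AEStronglyMeasurable g μ :=
    aestronglyMeasurable_of_tendsto_ae atTop (fun n => (hf_int n).1) hfg
  rw [integral_eq_lintegral_of_nonneg_ae hg_nonneg hg_meas]
  refine ENNReal.toReal_le_of_le_ofReal hL ?_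
  calc ∫⁻ x, ENNReal.ofReal (g x) ∂μ
      = ∫⁻ x, liminf (fun n => ENNReal.ofReal (f n x)) atTop ∂μ := by
        refine lintegral_congr_ae (hfg.mono fun x hx => ?_)
        exact ((ENNReal.continuous_ofReal.tendsto _).comp hx).liminf_eq.symm
    _ ≤ liminf (fun n => ∫⁻ x, ENNReal.ofReal (f n x) ∂μ) atTop :=
        lintegral_liminf_le' fun n => (hf_int n).1.aemeasurable.ennreal_ofReal
    _ = liminf (fun n => ENNReal.ofReal (∫ x, f n x ∂μ)) atTop := by
        simp_rw [ofReal_integral_eq_lintegral_ofReal (hf_int _) (hf_nonneg _)]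
    _ ≤ liminf (fun n => ENNReal.ofReal (u n)) atTop :=
        liminf_le_liminf (.of_forall fun n => ENNReal.ofReal_le_ofReal (hfu n))
    _ = ENNReal.ofReal L := ((ENNReal.continuous_ofReal.tendsto L).comp hu).liminf_eq

theorem integral_mul_norm_rpow_le_neg_mul {E : Type*} [NormedAddCommGroup E] {r : ℝ}
    (hr : 0 < r) {φ a : X → ℝ} {b : X → E} (hφ : 0 ≤ᵐ[μ] φ)
    (ha : Integrable (fun x => φ x * a x) μ) (hab : ∀ᵐ x ∂μ, a x + 1 / r * ‖b x‖ ^ r ≤ 0) :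
    ∫ x, φ x * ‖b x‖ ^ r ∂μ ≤ -r * ∫ x, φ x * a x ∂μ := by
  rw [← integral_const_mul]
  refine integral_mono_of_nonneg ?_ (ha.const_mul _) ?_
  · filter_upwards [hφ] with x hx
    exact mul_nonneg hx (by positivity)
  · filter_upwards [hφ, hab] with x (hφx : 0 ≤ φ x) habx
    have hbr : ‖b x‖ ^ r ≤ -r * a x := by
      have : r * (a x + 1 / r * ‖b x‖ ^ r) = r * a x + ‖b x‖ ^ r := by field_simp
      linarith [mul_nonpos_of_nonneg_of_nonpos hr.le habx]
    calc φ x * ‖b x‖ ^ r ≤ φ x * (-r * a x) := mul_le_mul_of_nonneg_left hbr hφx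
      _ = -r * (φ x * a x) := by ring

theorem Integrable.mul_norm_rpow_of_ae_bound [IsFiniteMeasure μ] {E : Type*}
    [NormedAddCommGroup E] {r : ℝ} (hr : 0 ≤ r) {φ : X → ℝ} {b : X → E} {M C : ℝ}
    (hφ : AEStronglyMeasurable φ μ) (hφM : ∀ᵐ x ∂μ, ‖φ x‖ ≤ M)
    (hb : AEStronglyMeasurable b μ) (hbC : ∀ᵐ x ∂μ, ‖b x‖ ≤ C) :
    Integrable (fun x => φ x * ‖b x‖ ^ r) μ := by
  have := (MemLp.of_bound (p := ENNReal.ofReal r) hb C hbC).integrable_norm_rpow'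
  rw [ENNReal.toReal_ofReal hr] at this
  exact this.bdd_mul hφ hφM

end MeasureTheory
theorem stmt_5_general (d : ℕ) (Ω : Set (EuclideanSpace ℝ (Fin d)))
    (hΩo : IsOpen Ω) (hΩb : Bornology.IsBounded Ω)
    (r' : ℝ) (hr' : 1 < r')
    (αn : ℕ → EuclideanSpace ℝ (Fin d) → ℝ)
    (βn : ℕ → EuclideanSpace ℝ (Fin d) → EuclideanSpace ℝ (Fin d))
    (hαnmeas : ∀ n, AEStronglyMeasurable (αn n) (volume.restrict Ω))
    (hβnmeas : ∀ n, AEStronglyMeasurable (βn n) (volume.restrict Ω))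
    (hbdd : ∀ n, ∃ C : ℝ, ∀ᵐ x ∂volume.restrict Ω, |αn n x| ≤ C ∧ ‖βn n x‖ ≤ C)
    (hconstr : ∀ n, ∀ᵐ x ∂volume.restrict Ω, αn n x + (1 / r') * ‖βn n x‖ ^ r' ≤ 0)
    (β : EuclideanSpace ℝ (Fin d) → EuclideanSpace ℝ (Fin d))
    (hβ : MemLp β (ENNReal.ofReal r') (volume.restrict Ω))
    (hβconv : Tendsto
      (fun n => eLpNorm (fun x => βn n x - β x) (ENNReal.ofReal r') (volume.restrict Ω))
      atTop (𝓝 0))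
    (α : SignedMeasure (EuclideanSpace ℝ (Fin d)))
    (hαconv : ∀ φ : EuclideanSpace ℝ (Fin d) → ℝ, Continuous φ →
      Tendsto (fun n => ∫ x in Ω, φ x * αn n x) atTop (𝓝 (signedIntegral α φ))) :
    ∀ φ : EuclideanSpace ℝ (Fin d) → ℝ, Continuous φ → (∀ x ∈ closure Ω, 0 ≤ φ x) →
      signedIntegral α φ + (1 / r') * ∫ x in Ω, φ x * ‖β x‖ ^ r' ≤ 0 := by
  intro φ hφc hφ0
  have hr'0 : 0 < r' := by linarith
  have : IsFiniteMeasure (volume.restrict Ω) := isFiniteMeasure_restrict.2 hΩb.measure_lt_top.ne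
  have hΩ : ∀ᵐ x ∂volume.restrict Ω, x ∈ closure Ω :=
    (ae_restrict_mem hΩo.measurableSet).mono fun x hx => subset_closure hx
  obtain ⟨M, hM⟩ := hΩb.isCompact_closure.exists_bound_of_continuousOn hφc.continuousOn
  have hφM : ∀ᵐ x ∂volume.restrict Ω, ‖φ x‖ ≤ M := hΩ.mono hM
  have hφ_nonneg : 0 ≤ᵐ[volume.restrict Ω] φ := hΩ.mono hφ0
  have hαn_int (n : ℕ) : Integrable (fun x => φ x * αn n x) (volume.restrict Ω) := by
    obtain ⟨C, hC⟩ := hbdd n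
    exact (Integrable.of_bound (hαnmeas n) C (hC.mono fun x hx => hx.1)).bdd_mul
      hφc.aestronglyMeasurable hφM
  have hβn_int (n : ℕ) : Integrable (fun x => φ x * ‖βn n x‖ ^ r') (volume.restrict Ω) := by
    obtain ⟨C, hC⟩ := hbdd n
    exact .mul_norm_rpow_of_ae_bound hr'0.le hφc.aestronglyMeasurable hφM (hβnmeas n)
      (hC.mono fun x hx => hx.2)
  obtain ⟨ns, hns_mono, hns⟩ := (tendstoInMeasure_of_tendsto_eLpNorm
    (ENNReal.ofReal_pos.2 hr'0).ne' hβnmeas hβ.1 hβconv).exists_seq_tendsto_ae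
  have hfatou : ∫ x in Ω, φ x * ‖β x‖ ^ r' ≤ -r' * signedIntegral α φ := by
    refine integral_le_of_tendsto_ae_of_integral_le (fun k => hβn_int (ns k))
      (fun k => hφ_nonneg.mono fun x hx => mul_nonneg hx (by positivity)) ?_
      (fun k => integral_mul_norm_rpow_le_neg_mul hr'0 hφ_nonneg (hαn_int _) (hconstr _))
      (((hαconv φ hφc).comp hns_mono.tendsto_atTop).const_mul _)
    filter_upwards [hns] with x hx
    exact (hx.norm.rpow_const (Or.inr hr'0.le)).const_mul (φ x)
  calc signedIntegral α φ + 1 / r' * ∫ x in Ω, φ x * ‖β x‖ ^ r'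
      = 1 / r' * ((∫ x in Ω, φ x * ‖β x‖ ^ r') - -r' * signedIntegral α φ) := by
        field_simp
        ring
    _ ≤ 0 := mul_nonpos_of_nonneg_of_nonpos (by positivity) (sub_nonpos.2 hfatou)

/-- Closedness of the constraint set: if `α_n ∈ L^∞(Ω)`, `β_n ∈ L^∞(Ω;ℝ^d)` satisfy
`α_n + (1/r')|β_n|^{r'} ≤ 0` a.e., `β_n → β` in `L^{r'}` and `α_n dx → α` weakly-* against
continuous functions on `Ω̄`, then `∫_{Ω̄} φ dα + (1/r') ∫_Ω φ |β|^{r'} dx ≤ 0` for every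
continuous `φ ≥ 0` on `Ω̄`. -/
theorem stmt_5 (d : ℕ) (Ω : Set (EuclideanSpace ℝ (Fin d)))
    (hΩne : Ω.Nonempty) (hΩo : IsOpen Ω) (hΩb : Bornology.IsBounded Ω)
    (r' : ℝ) (hr' : 1 < r')
    (αn : ℕ → EuclideanSpace ℝ (Fin d) → ℝ)
    (βn : ℕ → EuclideanSpace ℝ (Fin d) → EuclideanSpace ℝ (Fin d))
    (hαnmeas : ∀ n, AEStronglyMeasurable (αn n) (volume.restrict Ω))
    (hβnmeas : ∀ n, AEStronglyMeasurable (βn n) (volume.restrict Ω))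
    (hbdd : ∀ n, ∃ C : ℝ, ∀ᵐ x ∂volume.restrict Ω, |αn n x| ≤ C ∧ ‖βn n x‖ ≤ C)
    (hconstr : ∀ n, ∀ᵐ x ∂volume.restrict Ω, αn n x + (1 / r') * ‖βn n x‖ ^ r' ≤ 0)
    (β : EuclideanSpace ℝ (Fin d) → EuclideanSpace ℝ (Fin d))
    (hβ : MemLp β (ENNReal.ofReal r') (volume.restrict Ω))
    (hβconv : Tendsto
      (fun n => eLpNorm (fun x => βn n x - β x) (ENNReal.ofReal r') (volume.restrict Ω))
      atTop (𝓝 0))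
    (α : SignedMeasure (EuclideanSpace ℝ (Fin d)))
    (hconc : ∀ s : Set (EuclideanSpace ℝ (Fin d)),
      MeasurableSet s → Disjoint s (closure Ω) → α s = 0)
    (hαconv : ∀ φ : EuclideanSpace ℝ (Fin d) → ℝ, Continuous φ →
      Tendsto (fun n => ∫ x in Ω, φ x * αn n x) atTop (𝓝 (signedIntegral α φ))) :
    ∀ φ : EuclideanSpace ℝ (Fin d) → ℝ, Continuous φ → (∀ x ∈ closure Ω, 0 ≤ φ x) →
      signedIntegral α φ + (1 / r') * ∫ x in Ω, φ x * ‖β x‖ ^ r' ≤ 0 :=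
  stmt_5_general d Ω hΩo hΩb r' hr' αn βn hαnmeas hβnmeas hbdd hconstr β hβ hβconv α hαconv
end

section
/- Let Ω ⊂ ℝ^d be a nonempty bounded open set with closure Ω̄, let 1 < r ≤ q, r' := r/(r-1), let m : Ω̄ → ℝ be continuous with m ≥ 0, and w ∈ L^q(Ω;ℝ^d). Then sup{ ∫_{Ω̄} m dα + ∫_Ω β·w dx : α a finite signed Borel measure on Ω̄, β ∈ L^{r'}(Ω;ℝ^d), such that ∫_{Ω̄} φ dα + (1/r') ∫_Ω φ |β|^{r'} dx ≤ 0 for every nonnegative continuous φ : Ω̄ → ℝ } = sup{ −(1/r') ∫_Ω m |β|^{r'} dx + ∫_Ω β·w dx : β ∈ L^{r'}(Ω;ℝ^d) }. -/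
open MeasureTheory
open scoped RealInnerProductSpace ENNReal

section SignedIntegral

variable {E : Type*} [MeasurableSpace E]

theorem signedIntegral_neg_toSignedMeasure (ν : Measure E) [IsFiniteMeasure ν] (φ : E → ℝ) :
    signedIntegral (-ν.toSignedMeasure) φ = -∫ x, φ x ∂ν := by
  let j : JordanDecomposition E := ⟨ν, 0, .zero_right⟩
  have hj : j.toSignedMeasure = ν.toSignedMeasure := by
    simp [j, JordanDecomposition.toSignedMeasure]
  rw [signedIntegral, ← hj, SignedMeasure.toJordanDecomposition_neg,
    JordanDecomposition.toJordanDecomposition_toSignedMeasure, JordanDecomposition.neg_posPart,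
    JordanDecomposition.neg_negPart]
  simp [j]

theorem integral_withDensity_ofReal {μ : Measure E} {f : E → ℝ} (hf : AEMeasurable f μ)
    (hf0 : 0 ≤ᵐ[μ] f) (g : E → ℝ) :
    ∫ x, g x ∂μ.withDensity (fun x => ENNReal.ofReal (f x)) = ∫ x, g x * f x ∂μ := by
  rw [integral_withDensity_eq_integral_toReal_smul₀ hf.ennreal_ofReal
    (.of_forall fun _ => ENNReal.ofReal_lt_top)]
  refine integral_congr_ae ?_
  filter_upwards [hf0] with x hx
  rw [ENNReal.toReal_ofReal hx, smul_eq_mul, mul_comm]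

theorem exists_signedMeasure_signedIntegral_eq_neg_setIntegral_mul {μ : Measure E} {Ω : Set E}
    {f : E → ℝ} (hf : Integrable f (μ.restrict Ω)) (hf0 : 0 ≤ᵐ[μ.restrict Ω] f) :
    ∃ α : SignedMeasure E, (∀ s, MeasurableSet s → Disjoint s Ω → α s = 0) ∧
      ∀ φ : E → ℝ, signedIntegral α φ = -∫ x in Ω, φ x * f x ∂μ := by
  set ν := (μ.restrict Ω).withDensity fun x => ENNReal.ofReal (f x)
  have : IsFiniteMeasure ν := isFiniteMeasure_withDensity_ofReal hf.2
  refine ⟨-ν.toSignedMeasure, fun s hs hdisj => ?_, fun φ => ?_⟩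
  · have hνs : ν s = 0 := by
      rw [withDensity_apply _ hs, Measure.restrict_restrict hs, hdisj.inter_eq]
      simp
    simp [Measure.toSignedMeasure_apply_measurable hs, measureReal_def, hνs]
  · rw [signedIntegral_neg_toSignedMeasure,
      integral_withDensity_ofReal hf.aemeasurable hf0]

end SignedIntegral

theorem stmt_10_general (d : ℕ) (Ω : Set (EuclideanSpace ℝ (Fin d)))
    (r : ℝ) (hr : 1 < r)
    (m : EuclideanSpace ℝ (Fin d) → ℝ) (hm : Continuous m)
    (hm0 : ∀ x ∈ closure Ω, 0 ≤ m x)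
    (w : EuclideanSpace ℝ (Fin d) → EuclideanSpace ℝ (Fin d)) :
    sSup {y : EReal | ∃ α : SignedMeasure (EuclideanSpace ℝ (Fin d)),
        ∃ β : EuclideanSpace ℝ (Fin d) → EuclideanSpace ℝ (Fin d),
        (∀ s : Set (EuclideanSpace ℝ (Fin d)),
          MeasurableSet s → Disjoint s (closure Ω) → α s = 0) ∧
        MemLp β (ENNReal.ofReal (r / (r - 1))) (volume.restrict Ω) ∧
        (∀ φ : EuclideanSpace ℝ (Fin d) → ℝ, Continuous φ →
          (∀ x ∈ closure Ω, 0 ≤ φ x) →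
          signedIntegral α φ +
            (1 / (r / (r - 1))) * ∫ x in Ω, φ x * ‖β x‖ ^ (r / (r - 1)) ≤ 0) ∧
        y = ((signedIntegral α m + ∫ x in Ω, ⟪β x, w x⟫ : ℝ) : EReal)} =
      sSup {y : EReal | ∃ β : EuclideanSpace ℝ (Fin d) → EuclideanSpace ℝ (Fin d),
        MemLp β (ENNReal.ofReal (r / (r - 1))) (volume.restrict Ω) ∧
        y = ((-(1 / (r / (r - 1))) * (∫ x in Ω, m x * ‖β x‖ ^ (r / (r - 1))) +
          ∫ x in Ω, ⟪β x, w x⟫ : ℝ) : EReal)} := by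
  set p := r / (r - 1)
  have hp : 0 < p := div_pos (by linarith) (by linarith)
  apply le_antisymm
  · refine sSup_le ?_
    rintro _ ⟨α, β, -, hβ, hcon, rfl⟩
    refine le_sSup_of_le ⟨β, hβ, rfl⟩ (EReal.coe_le_coe_iff.2 ?_)
    linarith [hcon m hm hm0]
  · refine sSup_le ?_
    rintro _ ⟨β, hβ, rfl⟩
    have hint : Integrable (fun x => 1 / p * ‖β x‖ ^ p) (volume.restrict Ω) := by
      have := hβ.integrable_norm_rpow (by simpa using hp) ENNReal.ofReal_ne_top
      rw [ENNReal.toReal_ofReal hp.le] at this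
      exact this.const_mul _
    obtain ⟨α, hsupp, hα⟩ := exists_signedMeasure_signedIntegral_eq_neg_setIntegral_mul hint
      (.of_forall fun x => by positivity)
    have hα' : ∀ φ, signedIntegral α φ = -(1 / p * ∫ x in Ω, φ x * ‖β x‖ ^ p) := by
      intro φ
      simp_rw [hα, ← integral_const_mul, mul_left_comm]
    refine le_sSup ⟨α, β, fun s hs hdisj => hsupp s hs (hdisj.mono_right subset_closure), hβ,
      fun φ _ _ => by rw [hα']; simp, ?_⟩
    rw [hα']
    ring_nf

/-- For `Ω ⊂ ℝ^d` nonempty bounded open, `1 < r ≤ q`, `r' = r/(r-1)`, `m : Ω̄ → ℝ`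
continuous nonnegative and `w ∈ L^q(Ω;ℝ^d)`:
`sup { ∫_{Ω̄} m dα + ∫_Ω β·w dx : (α,β) with ∫ φ dα + (1/r')∫ φ|β|^{r'} ≤ 0 ∀ φ ≥ 0 }`
`= sup { -(1/r') ∫_Ω m |β|^{r'} dx + ∫_Ω β·w dx : β ∈ L^{r'}(Ω;ℝ^d) }`. -/
theorem stmt_10 (d : ℕ) (Ω : Set (EuclideanSpace ℝ (Fin d)))
    (hΩne : Ω.Nonempty) (hΩo : IsOpen Ω) (hΩb : Bornology.IsBounded Ω)
    (q r : ℝ) (hr : 1 < r) (hrq : r ≤ q)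
    (m : EuclideanSpace ℝ (Fin d) → ℝ) (hm : Continuous m)
    (hm0 : ∀ x ∈ closure Ω, 0 ≤ m x)
    (w : EuclideanSpace ℝ (Fin d) → EuclideanSpace ℝ (Fin d))
    (hw : MemLp w (ENNReal.ofReal q) (volume.restrict Ω)) :
    sSup {y : EReal | ∃ α : SignedMeasure (EuclideanSpace ℝ (Fin d)),
        ∃ β : EuclideanSpace ℝ (Fin d) → EuclideanSpace ℝ (Fin d),
        (∀ s : Set (EuclideanSpace ℝ (Fin d)),
          MeasurableSet s → Disjoint s (closure Ω) → α s = 0) ∧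
        MemLp β (ENNReal.ofReal (r / (r - 1))) (volume.restrict Ω) ∧
        (∀ φ : EuclideanSpace ℝ (Fin d) → ℝ, Continuous φ →
          (∀ x ∈ closure Ω, 0 ≤ φ x) →
          signedIntegral α φ +
            (1 / (r / (r - 1))) * ∫ x in Ω, φ x * ‖β x‖ ^ (r / (r - 1)) ≤ 0) ∧
        y = ((signedIntegral α m + ∫ x in Ω, ⟪β x, w x⟫ : ℝ) : EReal)} =
      sSup {y : EReal | ∃ β : EuclideanSpace ℝ (Fin d) → EuclideanSpace ℝ (Fin d),
        MemLp β (ENNReal.ofReal (r / (r - 1))) (volume.restrict Ω) ∧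
        y = ((-(1 / (r / (r - 1))) * (∫ x in Ω, m x * ‖β x‖ ^ (r / (r - 1))) +
          ∫ x in Ω, ⟪β x, w x⟫ : ℝ) : EReal)} :=
  stmt_10_general d Ω r hr m hm hm0 w
end

section
/- Let q > 1, q' := q/(q-1), r > 1, r' := r/(r-1). For ε > 0 and z ∈ ℝ^d let v_ε(z) denote the unique solution v of |v|^{q-2}v + ε|v|^{r-2}v = z, and define H_{q,ε}(z) := (1/q')|v_ε(z)|^q + (ε/r')|v_ε(z)|^r. Then H_{q,ε} converges to z ↦ (1/q')|z|^{q'} uniformly on every compact subset of ℝ^d as ε → 0⁺; that is, for every compact K ⊂ ℝ^d and every δ > 0 there exists ε₀ > 0 such that |H_{q,ε}(z) − (1/q')|z|^{q'}| < δ for all 0 < ε < ε₀ and all z ∈ K. -/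
/-- For `q, r > 1`, let `v_ε(z)` be the unique solution of `|v|^{q-2}v + ε|v|^{r-2}v = z`
and `H_{q,ε}(z) := (1/q')|v_ε(z)|^q + (ε/r')|v_ε(z)|^r`. Then `H_{q,ε} → (1/q')|·|^{q'}`
uniformly on compact subsets of `ℝ^d` as `ε → 0⁺`. -/
theorem stmt_13 (q r : ℝ) (hq : 1 < q) (hr : 1 < r) (d : ℕ)
    (v : ℝ → EuclideanSpace ℝ (Fin d) → EuclideanSpace ℝ (Fin d))
    (hv : ∀ ε : ℝ, 0 < ε → ∀ z : EuclideanSpace ℝ (Fin d),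
      ‖v ε z‖ ^ (q - 2) • v ε z + ε • (‖v ε z‖ ^ (r - 2) • v ε z) = z) :
    let q' : ℝ := q / (q - 1)
    let r' : ℝ := r / (r - 1)
    let H : ℝ → EuclideanSpace ℝ (Fin d) → ℝ := fun ε z =>
      (1 / q') * ‖v ε z‖ ^ q + (ε / r') * ‖v ε z‖ ^ r
    ∀ K : Set (EuclideanSpace ℝ (Fin d)), IsCompact K → ∀ δ : ℝ, 0 < δ →
      ∃ ε₀ : ℝ, 0 < ε₀ ∧ ∀ ε : ℝ, 0 < ε → ε < ε₀ → ∀ z ∈ K,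
        |H ε z - (1 / q') * ‖z‖ ^ q'| < δ := by
  intro q' r' H K hK δ hδ
  have hq'def : q' = q / (q - 1) := rfl
  have hr'def : r' = r / (r - 1) := rfl
  have hHdef : ∀ ε z, H ε z = (1 / q') * ‖v ε z‖ ^ q + (ε / r') * ‖v ε z‖ ^ r :=
    fun _ _ => rfl
  have hq1 : (0:ℝ) < q - 1 := by linarith
  have hr1 : (0:ℝ) < r - 1 := by linarith
  have hq' : 1 < q' := by rw [hq'def, lt_div_iff₀ hq1]; linarith
  have hr' : 1 < r' := by rw [hr'def, lt_div_iff₀ hr1]; linarith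
  have hq'0 : 0 < q' := by linarith
  -- key norm identity
  have key : ∀ ε : ℝ, 0 < ε → ∀ z, ‖v ε z‖ ^ (q-1) + ε * ‖v ε z‖ ^ (r-1) = ‖z‖ := by
    intro ε hε z
    have h := hv ε hε z
    set t := ‖v ε z‖ with htdef
    have ht0 : (0:ℝ) ≤ t := norm_nonneg _
    rcases eq_or_lt_of_le ht0 with h0 | h0
    · have hv0 : v ε z = 0 := by rw [← norm_eq_zero, ← htdef, ← h0]
      rw [hv0, smul_zero, smul_zero, smul_zero, add_zero] at h
      rw [← h0, ← h]
      simp [Real.zero_rpow (by linarith : q - 1 ≠ 0),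
        Real.zero_rpow (by linarith : r - 1 ≠ 0)]
    · have hc : ((t ^ (q-2) + ε * t ^ (r-2)) : ℝ) • v ε z = z := by
        rw [add_smul, mul_smul]; exact h
      have hcpos : (0:ℝ) ≤ t ^ (q-2) + ε * t ^ (r-2) := by
        have := Real.rpow_nonneg ht0 (q-2)
        have := Real.rpow_nonneg ht0 (r-2)
        nlinarith
      have hnorm : (t ^ (q-2) + ε * t ^ (r-2)) * t = ‖z‖ := by
        have h2 := congrArg norm hc
        rw [norm_smul, Real.norm_eq_abs, abs_of_nonneg hcpos] at h2
        exact h2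
      have e1 : t ^ (q-1) = t ^ (q-2) * t := by
        rw [show q - 1 = (q-2) + 1 by ring, Real.rpow_add h0, Real.rpow_one]
      have e2 : t ^ (r-1) = t ^ (r-2) * t := by
        rw [show r - 1 = (r-2) + 1 by ring, Real.rpow_add h0, Real.rpow_one]
      rw [e1, e2]; linear_combination hnorm
  -- bound on K
  obtain ⟨R, hR⟩ := hK.isBounded.subset_closedBall 0
  set M : ℝ := max R 0 with hMdef
  have hM0 : (0:ℝ) ≤ M := le_max_right _ _
  have hMK : ∀ z ∈ K, ‖z‖ ≤ M := fun z hz =>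
    le_trans (mem_closedBall_zero_iff.mp (hR hz)) (le_max_left _ _)
  set T : ℝ := (M + 1) ^ (1/(q-1)) with hTdef
  have hT0 : 0 < T := Real.rpow_pos_of_pos (by linarith) _
  have hTpow : T ^ (q-1) = M + 1 := by
    rw [hTdef, ← Real.rpow_mul (by linarith : (0:ℝ) ≤ M + 1), one_div,
      inv_mul_cancel₀ hq1.ne', Real.rpow_one]
  have htT : ∀ ε : ℝ, 0 < ε → ∀ z ∈ K, ‖v ε z‖ ≤ T := by
    intro ε hε z hz
    by_contra hcon
    push_neg at hcon
    have h1 : ‖v ε z‖ ^ (q-1) ≤ M := by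
      have hk := key ε hε z
      have h2 : 0 ≤ ε * ‖v ε z‖ ^ (r-1) := by
        have := Real.rpow_nonneg (norm_nonneg (v ε z)) (r-1); nlinarith
      have := hMK z hz
      linarith
    have h3 : T ^ (q-1) ≤ ‖v ε z‖ ^ (q-1) :=
      Real.rpow_le_rpow hT0.le hcon.le hq1.le
    rw [hTpow] at h3
    linarith
  -- uniform continuity of s ↦ |s| ^ q' on [0, M]
  set g : ℝ → ℝ := fun s => |s| ^ q' with hgdef
  have hgc : Continuous g := continuous_abs.rpow_const (fun x => Or.inr hq'0.le)
  have huc : UniformContinuousOn g (Set.Icc 0 M) :=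
    isCompact_Icc.uniformContinuousOn_of_continuous hgc.continuousOn
  rw [Metric.uniformContinuousOn_iff] at huc
  obtain ⟨η, hη, hucη⟩ := huc (q' * δ / 2) (by positivity)
  refine ⟨min (η / (T ^ (r-1) + 1)) (δ / 2 / (T ^ r + 1)), lt_min (by positivity) (by positivity),
    fun ε hε hεε₀ z hz => ?_⟩
  set t := ‖v ε z‖ with htdef
  have ht0 : (0:ℝ) ≤ t := norm_nonneg _
  have hkey := key ε hε z
  have htT' : t ≤ T := htT ε hε z hz
  have hzM : ‖z‖ ≤ M := hMK z hz
  set e := ε * t ^ (r-1) with hedef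
  have he0 : 0 ≤ e := by
    have := Real.rpow_nonneg ht0 (r-1); nlinarith
  have heη : e < η := by
    have h1 : t ^ (r-1) ≤ T ^ (r-1) := Real.rpow_le_rpow ht0 htT' hr1.le
    have h2 : ε < η / (T ^ (r-1) + 1) := lt_of_lt_of_le hεε₀ (min_le_left _ _)
    have h3 : 0 < T ^ (r-1) + 1 := by positivity
    have h4 : ε * (T ^ (r-1) + 1) < η := (lt_div_iff₀ h3).mp h2
    nlinarith [Real.rpow_nonneg hT0.le (r-1)]
  set x := t ^ (q-1) with hxdef
  have hx0 : 0 ≤ x := Real.rpow_nonneg ht0 _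
  have hxz : x = ‖z‖ - e := by rw [hxdef, hedef]; linarith
  have hxM : x ≤ M := by rw [hxz]; linarith
  have hdist : dist x ‖z‖ < η := by
    rw [Real.dist_eq, hxz, abs_of_nonpos (by linarith)]
    simpa using heη
  have hgd := hucη x ⟨hx0, hxM⟩ ‖z‖ ⟨norm_nonneg _, hzM⟩ hdist
  rw [Real.dist_eq] at hgd
  have hqq' : (q - 1) * q' = q := by rw [hq'def]; field_simp
  have hgx : g x = t ^ q := by
    rw [hgdef]
    simp only [abs_of_nonneg hx0]
    rw [hxdef, ← Real.rpow_mul ht0, hqq']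
  have hgz : g ‖z‖ = ‖z‖ ^ q' := by
    rw [hgdef]; simp only [abs_of_nonneg (norm_nonneg z)]
  -- bound on the second term
  have h2 : (ε / r') * t ^ r < δ / 2 := by
    have htr : t ^ r ≤ T ^ r := Real.rpow_le_rpow ht0 htT' (by linarith)
    have htr0 : 0 ≤ t ^ r := Real.rpow_nonneg ht0 _
    have hεr : ε / r' ≤ ε := div_le_self hε.le hr'.le
    have h3 : 0 < T ^ r + 1 := by positivity
    have h5 : ε < δ / 2 / (T ^ r + 1) := lt_of_lt_of_le hεε₀ (min_le_right _ _)
    have h6 : ε * (T ^ r + 1) < δ / 2 := (lt_div_iff₀ h3).mp h5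
    have h7 : (ε / r') * t ^ r ≤ ε * t ^ r := mul_le_mul_of_nonneg_right hεr htr0
    have h8 : ε * t ^ r ≤ ε * T ^ r := mul_le_mul_of_nonneg_left htr hε.le
    have h9 : ε * (T ^ r + 1) = ε * T ^ r + ε := by ring
    linarith
  have hrewrite : H ε z - (1 / q') * ‖z‖ ^ q'
      = (1 / q') * (g x - g ‖z‖) + (ε / r') * t ^ r := by
    rw [hHdef, hgx, hgz, ← htdef]; ring
  rw [hrewrite]
  have habs : |(1 / q') * (g x - g ‖z‖)| < δ / 2 := by
    rw [abs_mul, abs_of_nonneg (by positivity : (0:ℝ) ≤ 1 / q')]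
    calc (1 / q') * |g x - g ‖z‖| < (1 / q') * (q' * δ / 2) := by
          apply mul_lt_mul_of_pos_left hgd (by positivity)
      _ = δ / 2 := by field_simp
  have h2' : 0 ≤ (ε / r') * t ^ r := by
    have := Real.rpow_nonneg ht0 r
    have : 0 ≤ ε / r' := by positivity
    positivity
  calc |(1 / q') * (g x - g ‖z‖) + (ε / r') * t ^ r|
      ≤ |(1 / q') * (g x - g ‖z‖)| + |(ε / r') * t ^ r| := abs_add_le _ _
    _ = |(1 / q') * (g x - g ‖z‖)| + (ε / r') * t ^ r := by rw [abs_of_nonneg h2']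
    _ < δ / 2 + δ / 2 := by linarith
    _ = δ := by ring
end
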